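/- arXiv:1504.03138 — 3 statements merged into one kernel-verified Lean document; each statement's English description precedes it below -/
import Mathlib

section
/- Let c > 0, α > 0, β > 0, and let (v_n) and (e_n) be sequences of nonnegative real numbers such that v_n/n³ → α and e_n/n² → β as n → ∞. Then there exist a constant C > 0 and a sequence (x_n) of nonnegative reals with x_n → ∞ such that for every n and every r ∈ [0, x_n], exp(−((v_n^{1/2}·r + e_n)^{1/4} − e_n^{1/4})²/(2c)) ≤ exp(−C·r²). -/
/-!
Since `v_n ≍ n³` and `e_n ≍ n²`, eventually `v_n ≥ K e_n^{3/2}` for a fixed `K > 0`, and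
`x_n := e_n / √v_n ≍ √n → ∞`. For `r ≤ x_n` the increment `d = √v_n r` is at most `e_n`, so
`t = d + e_n ≤ 2 e_n`, and `t - s ≤ 4 t^{3/4} (t^{1/4} - s^{1/4})` (from factoring `a⁴ - b⁴`) gives
`((d + e_n)^{1/4} - e_n^{1/4})² ≥ v_n r² / (64 e_n^{3/2}) ≥ K r² / 64`.
-/

open Filter Topology

lemma pow_four_sub_pow_four_le {a b : ℝ} (hb : 0 ≤ b) (hba : b ≤ a) :
    a ^ 4 - b ^ 4 ≤ 4 * a ^ 3 * (a - b) := by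
  have hfactor : a ^ 4 - b ^ 4 = (a - b) * (a ^ 3 + a ^ 2 * b + a * b ^ 2 + b ^ 3) := by ring
  have hsum : a ^ 3 + a ^ 2 * b + a * b ^ 2 + b ^ 3 ≤ 4 * a ^ 3 := by
    have ha : 0 ≤ a := hb.trans hba
    have h1 : a ^ 2 * b ≤ a ^ 2 * a := by gcongr
    have h2 : a * b ^ 2 ≤ a * a ^ 2 := by gcongr
    have h3 : b ^ 3 ≤ a ^ 3 := by gcongr
    nlinarith
  rw [hfactor, mul_comm (4 * a ^ 3)]
  exact mul_le_mul_of_nonneg_left hsum (sub_nonneg.2 hba)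

lemma sq_sub_le_mul_sq_sub_rpow_quarter {s t : ℝ} (hs : 0 ≤ s) (hst : s ≤ t) :
    (t - s) ^ 2 ≤ 16 * t ^ ((3 : ℝ) / 2) * (t ^ ((1 : ℝ) / 4) - s ^ ((1 : ℝ) / 4)) ^ 2 := by
  have ht : 0 ≤ t := hs.trans hst
  have hpow : ∀ {x : ℝ} (k : ℕ), 0 ≤ x → (x ^ ((1 : ℝ) / 4)) ^ k = x ^ ((k : ℝ) / 4) := by
    intro x k hx
    rw [← Real.rpow_natCast, ← Real.rpow_mul hx]
    ring_nf
  have hb : 0 ≤ s ^ ((1 : ℝ) / 4) := Real.rpow_nonneg hs _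
  have hba : s ^ ((1 : ℝ) / 4) ≤ t ^ ((1 : ℝ) / 4) := Real.rpow_le_rpow hs hst (by norm_num)
  have hmain := pow_four_sub_pow_four_le hb hba
  rw [hpow 4 ht, hpow 4 hs, hpow 3 ht] at hmain
  simp only [Nat.cast_ofNat, div_self (four_ne_zero : (4 : ℝ) ≠ 0), Real.rpow_one] at hmain
  have h32 : t ^ ((3 : ℝ) / 2) = (t ^ ((3 : ℝ) / 4)) ^ 2 := by
    rw [← Real.rpow_natCast, ← Real.rpow_mul ht]
    norm_num
  calc (t - s) ^ 2 ≤ (4 * t ^ ((3 : ℝ) / 4) * (t ^ ((1 : ℝ) / 4) - s ^ ((1 : ℝ) / 4))) ^ 2 :=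
        pow_le_pow_left₀ (sub_nonneg.2 hst) hmain 2
    _ = _ := by rw [h32]; ring

lemma mul_sq_le_sq_sub_rpow_quarter {K v e r : ℝ} (hv : 0 ≤ v) (he : 0 < e)
    (hKv : K * e ^ ((3 : ℝ) / 2) ≤ v) (hr : 0 ≤ r) (hre : v ^ ((1 : ℝ) / 2) * r ≤ e) :
    K * r ^ 2 ≤ 64 * ((v ^ ((1 : ℝ) / 2) * r + e) ^ ((1 : ℝ) / 4) - e ^ ((1 : ℝ) / 4)) ^ 2 := by
  set t := v ^ ((1 : ℝ) / 2) * r + e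
  set D := t ^ ((1 : ℝ) / 4) - e ^ ((1 : ℝ) / 4)
  have hd : 0 ≤ v ^ ((1 : ℝ) / 2) * r := mul_nonneg (Real.rpow_nonneg hv _) hr
  have hsq : (t - e) ^ 2 = v * r ^ 2 := by
    rw [add_sub_cancel_right, mul_pow, ← Real.sqrt_eq_rpow, Real.sq_sqrt hv]
  have hdev := sq_sub_le_mul_sq_sub_rpow_quarter he.le (le_add_of_nonneg_left hd : e ≤ t)
  have ht : t ^ ((3 : ℝ) / 2) ≤ 4 * e ^ ((3 : ℝ) / 2) :=
    calc t ^ ((3 : ℝ) / 2) ≤ (2 * e) ^ ((3 : ℝ) / 2) :=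
          Real.rpow_le_rpow (by positivity) (by linarith) (by norm_num)
      _ = 2 ^ ((3 : ℝ) / 2) * e ^ ((3 : ℝ) / 2) := Real.mul_rpow (by norm_num) he.le
      _ ≤ 2 ^ (2 : ℝ) * e ^ ((3 : ℝ) / 2) := by
          gcongr <;> norm_num
      _ = 4 * e ^ ((3 : ℝ) / 2) := by norm_num
  have he32 : 0 < e ^ ((3 : ℝ) / 2) := Real.rpow_pos_of_pos he _
  refine le_of_mul_le_mul_right ?_ he32
  calc K * r ^ 2 * e ^ ((3 : ℝ) / 2) = K * e ^ ((3 : ℝ) / 2) * r ^ 2 := by ring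
    _ ≤ v * r ^ 2 := by gcongr
    _ ≤ 16 * t ^ ((3 : ℝ) / 2) * D ^ 2 := hsq ▸ hdev
    _ ≤ 16 * (4 * e ^ ((3 : ℝ) / 2)) * D ^ 2 := by gcongr
    _ = 64 * D ^ 2 * e ^ ((3 : ℝ) / 2) := by ring

section Asymptotics

variable {v e : ℕ → ℝ} {α β : ℝ}

lemma tendsto_div_rpow_three_halves (he : ∀ n, 0 ≤ e n) (hβ : 0 < β)
    (hvlim : Tendsto (fun n => v n / (n : ℝ) ^ 3) atTop (𝓝 α))
    (helim : Tendsto (fun n => e n / (n : ℝ) ^ 2) atTop (𝓝 β)) :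
    Tendsto (fun n => v n / e n ^ ((3 : ℝ) / 2)) atTop (𝓝 (α / β ^ ((3 : ℝ) / 2))) := by
  refine (hvlim.div (helim.rpow_const (Or.inl hβ.ne')) (Real.rpow_pos_of_pos hβ _).ne').congr' ?_
  filter_upwards [eventually_gt_atTop 0] with n hn
  have hn' : (0 : ℝ) < n := Nat.cast_pos.2 hn
  have hcube : ((n : ℝ) ^ 2) ^ ((3 : ℝ) / 2) = (n : ℝ) ^ 3 := by
    rw [← Real.rpow_natCast, ← Real.rpow_mul hn'.le, ← Real.rpow_natCast]
    norm_num
  rw [Pi.div_apply, Real.div_rpow (he n) (by positivity), hcube,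
    div_div_div_cancel_right₀ (by positivity)]

lemma tendsto_div_rpow_half_atTop (hv : ∀ n, 0 ≤ v n) (he : ∀ n, 0 ≤ e n) (hα : 0 < α)
    (hβ : 0 < β) (hvlim : Tendsto (fun n => v n / (n : ℝ) ^ 3) atTop (𝓝 α))
    (helim : Tendsto (fun n => e n / (n : ℝ) ^ 2) atTop (𝓝 β)) :
    Tendsto (fun n => e n / v n ^ ((1 : ℝ) / 2)) atTop atTop := by
  have hsq : Tendsto (fun n => (e n / (n : ℝ) ^ 2) ^ 2 / (v n / (n : ℝ) ^ 3) * n) atTop atTop :=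
    ((helim.pow 2).div hvlim hα.ne').pos_mul_atTop (by positivity) tendsto_natCast_atTop_atTop
  refine (Real.tendsto_sqrt_atTop.comp hsq).congr' ?_
  filter_upwards [eventually_gt_atTop 0] with n hn
  have hn' : (n : ℝ) ≠ 0 := Nat.cast_ne_zero.2 hn.ne'
  have hratio : (e n / (n : ℝ) ^ 2) ^ 2 / (v n / (n : ℝ) ^ 3) * n = e n ^ 2 / v n := by
    rcases (hv n).eq_or_lt with hv0 | hvpos
    · simp [← hv0]
    · field_simp
  rw [Function.comp_apply, hratio, Real.sqrt_div' _ (hv n), Real.sqrt_sq (he n),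
    Real.sqrt_eq_rpow]

lemma eventually_pos_and_mul_rpow_three_halves_le (he : ∀ n, 0 ≤ e n) (hβ : 0 < β)
    (hvlim : Tendsto (fun n => v n / (n : ℝ) ^ 3) atTop (𝓝 α))
    (helim : Tendsto (fun n => e n / (n : ℝ) ^ 2) atTop (𝓝 β)) {K : ℝ}
    (hK : K < α / β ^ ((3 : ℝ) / 2)) :
    ∀ᶠ n in atTop, 0 < e n ∧ K * e n ^ ((3 : ℝ) / 2) ≤ v n := by
  filter_upwards [helim.eventually (eventually_gt_nhds hβ),
    (tendsto_div_rpow_three_halves he hβ hvlim helim).eventually (eventually_gt_nhds hK)]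
    with n hen hKv
  have hepos : 0 < e n := (he n).lt_of_ne (by rintro h; simp [← h] at hen)
  exact ⟨hepos, ((lt_div_iff₀ (Real.rpow_pos_of_pos hepos _)).1 hKv).le⟩

end Asymptotics

/-- Consistency with the CLT (Theorem 6.6): if `v_n/n³ → α > 0` and `e_n/n² → β > 0`,
then there are `C > 0` and `x_n → ∞` such that for all `n` and all `r ∈ [0, x_n]`,
`exp(−((√v_n·r + e_n)^{1/4} − e_n^{1/4})²/(2c)) ≤ exp(−C·r²)`. -/
theorem clt_consistency (c α β : ℝ) (hc : 0 < c) (hα : 0 < α) (hβ : 0 < β)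
    (v e : ℕ → ℝ) (hv : ∀ n, 0 ≤ v n) (he : ∀ n, 0 ≤ e n)
    (hvlim : Tendsto (fun n => v n / (n : ℝ) ^ 3) atTop (nhds α))
    (helim : Tendsto (fun n => e n / (n : ℝ) ^ 2) atTop (nhds β)) :
    ∃ C : ℝ, 0 < C ∧ ∃ x : ℕ → ℝ, (∀ n, 0 ≤ x n) ∧
      Tendsto x atTop atTop ∧
      ∀ n : ℕ, ∀ r : ℝ, 0 ≤ r → r ≤ x n →
        Real.exp (-((v n ^ ((1 : ℝ) / 2) * r + e n) ^ ((1 : ℝ) / 4)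
              - e n ^ ((1 : ℝ) / 4)) ^ 2 / (2 * c)) ≤
          Real.exp (-C * r ^ 2) := by
  set K := α / β ^ ((3 : ℝ) / 2) / 2
  have hK : 0 < K := by positivity
  have hgood := eventually_pos_and_mul_rpow_three_halves_le he hβ hvlim helim
    (half_lt_self (by positivity) : K < _)
  refine ⟨K / (128 * c), by positivity,
    fun n => if 0 < e n ∧ K * e n ^ ((3 : ℝ) / 2) ≤ v n then e n / v n ^ ((1 : ℝ) / 2) else 0,
    fun n => ?_, (tendsto_div_rpow_half_atTop hv he hα hβ hvlim helim).congr'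
      (hgood.mono fun n hn => (if_pos hn).symm), fun n r hr hrx => ?_⟩
  · dsimp only
    split_ifs
    exacts [div_nonneg (he n) (Real.rpow_nonneg (hv n) _), le_rfl]
  · dsimp only at hrx
    split_ifs at hrx with hn
    · obtain ⟨hepos, hKv⟩ := hn
      have hsqrt : 0 < v n ^ ((1 : ℝ) / 2) :=
        Real.rpow_pos_of_pos ((mul_pos hK (Real.rpow_pos_of_pos hepos _)).trans_le hKv) _
      have hdev := mul_sq_le_sq_sub_rpow_quarter (hv n) hepos hKv hr
        (by rwa [le_div_iff₀ hsqrt, mul_comm] at hrx)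
      rw [Real.exp_le_exp, neg_mul, neg_div, neg_le_neg_iff, div_mul_eq_mul_div,
        div_le_div_iff₀ (by positivity) (by positivity)]
      nlinarith
    · obtain rfl : r = 0 := le_antisymm hrx hr
      simp
end

section
/- Let (Ω, P) be a probability space, let X : Ω → ℕ be Poisson distributed with parameter m > 0, and let N be an integrable real random variable with N ≥ X(X−1)/2 almost surely. Let I : (0,∞) → (0,∞) satisfy I(r) → ∞ as r → ∞ and P(N ≥ E N + r) ≤ exp(−I(r)) for all r > 0. Then limsup_{r→∞} I(r)/(r^{1/2}·log r) ≤ 1/√2. -/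
open MeasureTheory Filter Topology

/-!
Every configuration with `X = k` forces `N ≥ k(k-1)/2`, so choosing `k ≈ √(2r)` with
`k(k-1)/2 ≥ E N + r` gives `P(X = k) ≤ P(N ≥ E N + r) ≤ exp(-I r)`. Since
`-log P(X = k) ≤ m + k log k + k |log m|`, this yields
`I r ≤ m + k (log k + |log m|) ~ √(2r) · (log r) / 2 = r^{1/2} log r / √2`.
-/
theorem exp_neg_le_poisson_mass {m : ℝ} (hm : 0 < m) (k : ℕ) :
    Real.exp (-(m + k * (Real.log k + |Real.log m|))) ≤
      Real.exp (-m) * m ^ k / (k.factorial : ℝ) := by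
  have hfac : (0 : ℝ) < k.factorial := mod_cast k.factorial_pos
  rw [← Real.le_log_iff_exp_le (by positivity), Real.log_div (by positivity) hfac.ne',
    Real.log_mul (Real.exp_ne_zero _) (by positivity), Real.log_exp, Real.log_pow]
  have hlog_fac : Real.log k.factorial ≤ k * Real.log k := by
    rw [← Real.log_pow]
    exact Real.log_le_log hfac (mod_cast k.factorial_le_pow)
  have := mul_le_mul_of_nonneg_left (neg_le_abs (Real.log m)) k.cast_nonneg
  linarith

theorem le_of_poisson_mass_le_exp_neg {m J K : ℝ} (hm : 0 < m) {k : ℕ} (hk : 1 ≤ k)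
    (hkK : (k : ℝ) ≤ K) (hJ : Real.exp (-m) * m ^ k / (k.factorial : ℝ) ≤ Real.exp (-J)) :
    J ≤ m + K * (Real.log K + |Real.log m|) := by
  have hk₁ : (1 : ℝ) ≤ k := mod_cast hk
  have hmono : (k : ℝ) * (Real.log k + |Real.log m|) ≤ K * (Real.log K + |Real.log m|) :=
    mul_le_mul hkK (by gcongr) (by positivity) (by linarith)
  have := Real.exp_le_exp.mp ((exp_neg_le_poisson_mass hm k).trans hJ)
  linarith

theorem exists_nat_mul_pred_half_ge_and_le_sqrt_add (a : ℝ) :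
    ∃ c : ℝ, ∀ r : ℝ, 0 ≤ r →
      ∃ k : ℕ, 1 ≤ k ∧ a + r ≤ k * ((k : ℝ) - 1) / 2 ∧ (k : ℝ) ≤ √(2 * r) + c := by
  refine ⟨⌈a⌉₊ + 3, fun r hr => ⟨⌈√(2 * r)⌉₊ + (⌈a⌉₊ + 2), by omega, ?_, ?_⟩⟩
  · set s := √(2 * r)
    have hs : s * s = 2 * r := Real.mul_self_sqrt (by linarith)
    have hs0 : 0 ≤ s := Real.sqrt_nonneg _
    have h1 := Nat.le_ceil s
    have h2 := Nat.le_ceil a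
    push_cast
    nlinarith
  · have := Nat.ceil_lt_add_one (Real.sqrt_nonneg (2 * r))
    push_cast
    linarith

theorem measure_eq_le_measure_le_of_ae_le {Ω : Type*} [MeasurableSpace Ω] {P : Measure Ω}
    {X : Ω → ℕ} {N : Ω → ℝ} (hNX : ∀ᵐ ω ∂P, (X ω : ℝ) * ((X ω : ℝ) - 1) / 2 ≤ N ω)
    {t : ℝ} {k : ℕ} (hk : t ≤ k * ((k : ℝ) - 1) / 2) :
    P {ω | X ω = k} ≤ P {ω | t ≤ N ω} := by
  refine measure_mono_ae ?_
  filter_upwards [hNX] with ω hω (hωk : X ω = k)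
  rw [hωk] at hω
  exact hk.trans hω

theorem tendsto_sqrt_two_mul_add_log_div (a c L : ℝ) :
    Tendsto (fun r : ℝ => (a + (√(2 * r) + c) * (Real.log (√(2 * r) + c) + L)) /
      (r ^ ((1 : ℝ) / 2) * Real.log r)) atTop (𝓝 (1 / √2)) := by
  have hsqrt : Tendsto (fun r : ℝ => √r) atTop atTop := by
    simpa [Real.sqrt_eq_rpow] using tendsto_rpow_atTop (by norm_num : (0 : ℝ) < 1 / 2)
  have hlog := Real.tendsto_log_atTop
  have hu : Tendsto (fun r : ℝ => √2 + c / √r) atTop (𝓝 √2) := by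
    simpa using tendsto_const_nhds.add (tendsto_const_nhds.div_atTop hsqrt)
  have hlim : Tendsto (fun r : ℝ => a / (√r * Real.log r) +
      (√2 + c / √r) * (1 / 2 + (Real.log (√2 + c / √r) + L) / Real.log r))
      atTop (𝓝 (0 + √2 * (1 / 2 + 0))) :=
    (tendsto_const_nhds.div_atTop (hsqrt.atTop_mul_atTop₀ hlog)).add
      (hu.mul (tendsto_const_nhds.add
        (((hu.log (by positivity)).add tendsto_const_nhds).div_atTop hlog)))
  have hval : (0 : ℝ) + √2 * (1 / 2 + 0) = 1 / √2 := by
    field_simp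
    norm_num
  rw [hval] at hlim
  refine hlim.congr' ?_
  filter_upwards [eventually_gt_atTop 1, hu.eventually (eventually_gt_nhds (by positivity))]
    with r hr hur
  have hr0 : 0 < √r := Real.sqrt_pos.mpr (by linarith)
  have hlogr : 0 < Real.log r := Real.log_pos hr
  have hfactor : √(2 * r) + c = √r * (√2 + c / √r) := by
    rw [Real.sqrt_mul zero_le_two]
    field_simp
  rw [← Real.sqrt_eq_rpow, hfactor, Real.log_mul hr0.ne' hur.ne', Real.log_sqrt (by linarith)]
  field_simp
  ring

theorem upper_tail_rate_optimal_general {Ω : Type*} [MeasurableSpace Ω]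
    (P : Measure Ω) [IsProbabilityMeasure P]
    (m : ℝ) (hm : 0 < m) (X : Ω → ℕ)
    (hX : ∀ k : ℕ, P {ω | X ω = k} =
      ENNReal.ofReal (Real.exp (-m) * m ^ k / (Nat.factorial k : ℝ)))
    (N : Ω → ℝ)
    (hNX : ∀ᵐ ω ∂P, (X ω : ℝ) * ((X ω : ℝ) - 1) / 2 ≤ N ω)
    (I : ℝ → ℝ) (hIpos : ∀ r : ℝ, 0 < r → 0 < I r)
    (htail : ∀ r : ℝ, 0 < r →
      (P {ω | (∫ ω', N ω' ∂P) + r ≤ N ω}).toReal ≤ Real.exp (-I r)) :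
    limsup (fun r : ℝ => I r / (r ^ ((1 : ℝ) / 2) * Real.log r)) atTop ≤
      1 / Real.sqrt 2 := by
  obtain ⟨c, hc⟩ := exists_nat_mul_pred_half_ge_and_le_sqrt_add (∫ ω, N ω ∂P)
  have hI : ∀ r : ℝ, 0 < r →
      I r ≤ m + (√(2 * r) + c) * (Real.log (√(2 * r) + c) + |Real.log m|) := by
    intro r hr
    obtain ⟨k, hk₁, hkr, hkc⟩ := hc r hr.le
    have hmass := ENNReal.toReal_mono (measure_ne_top P _)
      (measure_eq_le_measure_le_of_ae_le hNX hkr)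
    rw [hX k, ENNReal.toReal_ofReal (by positivity)] at hmass
    exact le_of_poisson_mass_le_exp_neg hm hk₁ hkc (hmass.trans (htail r hr))
  have hbound := tendsto_sqrt_two_mul_add_log_div m c |Real.log m|
  have hle : ∀ᶠ r in atTop, I r / (r ^ ((1 : ℝ) / 2) * Real.log r) ≤
      (m + (√(2 * r) + c) * (Real.log (√(2 * r) + c) + |Real.log m|)) /
        (r ^ ((1 : ℝ) / 2) * Real.log r) := by
    filter_upwards [eventually_gt_atTop 1] with r hr
    have := Real.log_pos hr
    gcongr
    exact hI r (by linarith)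
  have hnonneg : ∀ᶠ r in atTop, 0 ≤ I r / (r ^ ((1 : ℝ) / 2) * Real.log r) := by
    filter_upwards [eventually_gt_atTop 1] with r hr
    have := Real.log_pos hr
    have := hIpos r (by linarith)
    positivity
  exact (limsup_le_limsup hle (isCoboundedUnder_le_of_eventually_le atTop hnonneg)
    hbound.isBoundedUnder_le).trans hbound.limsup_eq.le

/-- Proposition 6.1 (optimality of upper-tail rates): let `X` be Poisson with mean
`m > 0`, let `N ≥ X(X−1)/2` a.s. be integrable, and let `I` satisfy `I(r) → ∞` and
`P(N ≥ EN + r) ≤ exp(−I(r))` for all `r > 0`. Then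
`limsup_{r→∞} I(r)/(r^{1/2}·log r) ≤ 1/√2`. -/
theorem upper_tail_rate_optimal {Ω : Type*} [MeasurableSpace Ω]
    (P : Measure Ω) [IsProbabilityMeasure P]
    (m : ℝ) (hm : 0 < m) (X : Ω → ℕ)
    (hX : ∀ k : ℕ, P {ω | X ω = k} =
      ENNReal.ofReal (Real.exp (-m) * m ^ k / (Nat.factorial k : ℝ)))
    (N : Ω → ℝ) (hN : Integrable N P)
    (hNX : ∀ᵐ ω ∂P, (X ω : ℝ) * ((X ω : ℝ) - 1) / 2 ≤ N ω)
    (I : ℝ → ℝ) (hIpos : ∀ r : ℝ, 0 < r → 0 < I r)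
    (hItop : Tendsto I atTop atTop)
    (htail : ∀ r : ℝ, 0 < r →
      (P {ω | (∫ ω', N ω' ∂P) + r ≤ N ω}).toReal ≤ Real.exp (-I r)) :
    limsup (fun r : ℝ => I r / (r ^ ((1 : ℝ) / 2) * Real.log r)) atTop ≤
      1 / Real.sqrt 2 :=
  upper_tail_rate_optimal_general P m hm X hX N hNX I hIpos htail
end

section
/- Let (Ω, P) be a probability space, let X : Ω → ℕ be Poisson distributed with parameter m > 0, and let N be an integrable real random variable with N ≥ X(X−1)/2 almost surely. Let I : (0,∞) → (0,∞) satisfy P(N ≥ E N + r) ≤ exp(−I(r)) for all r > 0, and suppose there are constants a > 0 and b > 0 such that I(r)/r^a → b as r → ∞. Then a ≤ 1/2. -/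
open MeasureTheory Filter Asymptotics Real

/-! A Poisson variable takes the value `k` with probability `e^{-m} m^k / k!`, and on that event
`N ≥ k(k-1)/2`. Hence for `r_k = k(k-1)/2 - E N ~ k²/2` the tail bound gives
`I(r_k) ≤ -log P(X = k) = O(k log k)`, while `I(r_k) ~ b r_k^a ≍ k^{2a}`. Since `b > 0`, this
forces `2a ≤ 1`. -/

lemma le_neg_log_of_ae_le {Ω : Type*} [MeasurableSpace Ω] {P : Measure Ω} [IsFiniteMeasure P]
    {s t : Set Ω} {p J : ℝ} (hp : 0 < p) (hs : P s = ENNReal.ofReal p) (hst : s ≤ᵐ[P] t)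
    (ht : (P t).toReal ≤ exp (-J)) : J ≤ -log p := by
  have hpt : p ≤ (P t).toReal := by
    rw [← ENNReal.toReal_ofReal hp.le, ← hs]
    exact ENNReal.toReal_mono (measure_ne_top P t) (measure_mono_ae hst)
  have := log_le_log hp (hpt.trans ht)
  rw [log_exp] at this
  linarith

lemma neg_log_poisson_le {m : ℝ} (hm : 0 < m) (k : ℕ) :
    -log (exp (-m) * m ^ k / k.factorial) ≤ m + k * (log k + |log m|) := by
  have hfact : log k.factorial ≤ k * log k := by
    calc log k.factorial ≤ log ((k : ℝ) ^ k) :=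
          log_le_log (by positivity) (by exact_mod_cast k.factorial_le_pow)
      _ = k * log k := log_pow k _
  rw [log_div (by positivity) (by positivity), log_mul (exp_ne_zero _) (by positivity), log_exp,
    log_pow]
  nlinarith [neg_abs_le (log m), (k.cast_nonneg : (0 : ℝ) ≤ k)]

lemma isLittleO_const_add_mul_log_add_const_rpow {p : ℝ} (hp : 1 < p) (m c : ℝ) :
    (fun x => m + x * (log x + c)) =o[atTop] fun x => x ^ p := by
  have hconst : ∀ {q : ℝ}, 0 < q → ∀ d : ℝ, (fun _ => d) =o[atTop] fun x : ℝ => x ^ q :=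
    fun hq d => isLittleO_const_left.2 <| Or.inr <|
      tendsto_norm_atTop_atTop.comp (tendsto_rpow_atTop hq)
  have hlog : (fun x => log x + c) =o[atTop] fun x => x ^ (p - 1) :=
    (isLittleO_log_rpow_atTop (by linarith)).add (hconst (by linarith) c)
  have hmul : (fun x => x * (log x + c)) =o[atTop] fun x => x ^ p := by
    refine ((isBigO_refl (fun x : ℝ => x) atTop).mul_isLittleO hlog).trans_eventuallyEq ?_
    filter_upwards [eventually_gt_atTop 0] with x hx
    rw [rpow_sub_one hx.ne', mul_div_cancel₀ _ hx.ne']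
  exact (hconst (by linarith) m).add hmul

lemma div_rpow_le_of_sq_div_four_le {a x r y B : ℝ} (ha : 0 ≤ a) (hx : 0 < x)
    (hxr : x ^ 2 / 4 ≤ r) (hy : y ≤ B) (hB : 0 ≤ B) :
    y / r ^ a ≤ 4 ^ a * (B / x ^ (2 * a)) := by
  have hsq : (x ^ 2 / 4) ^ a = x ^ (2 * a) / 4 ^ a := by
    rw [div_rpow (by positivity) (by norm_num), ← rpow_natCast, ← rpow_mul hx.le]
    norm_num
  calc y / r ^ a ≤ B / (x ^ 2 / 4) ^ a :=
        div_le_div₀ hB hy (by positivity) (rpow_le_rpow (by positivity) hxr ha)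
    _ = 4 ^ a * (B / x ^ (2 * a)) := by rw [hsq]; field_simp

lemma eventually_sq_div_four_le (E : ℝ) :
    ∀ᶠ k : ℕ in atTop, (k : ℝ) ^ 2 / 4 ≤ k * (k - 1) / 2 - E := by
  filter_upwards [tendsto_natCast_atTop_atTop.eventually_ge_atTop (4 * |E| + 4)] with k hk
  nlinarith [le_abs_self E, abs_nonneg E]

theorem upper_tail_exponent_le_half_general {Ω : Type*} [MeasurableSpace Ω]
    (P : Measure Ω) [IsProbabilityMeasure P]
    (m : ℝ) (hm : 0 < m) (X : Ω → ℕ)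
    (hX : ∀ k : ℕ, P {ω | X ω = k} =
      ENNReal.ofReal (Real.exp (-m) * m ^ k / (Nat.factorial k : ℝ)))
    (N : Ω → ℝ)
    (hNX : ∀ᵐ ω ∂P, (X ω : ℝ) * ((X ω : ℝ) - 1) / 2 ≤ N ω)
    (I : ℝ → ℝ)
    (htail : ∀ r : ℝ, 0 < r →
      (P {ω | (∫ ω', N ω' ∂P) + r ≤ N ω}).toReal ≤ Real.exp (-I r))
    (a b : ℝ) (hb : 0 < b)
    (hlim : Tendsto (fun r : ℝ => I r / r ^ a) atTop (nhds b)) :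
    a ≤ 1 / 2 := by
  by_contra! ha
  set E := ∫ ω, N ω ∂P
  set r : ℕ → ℝ := fun k => k * (k - 1) / 2 - E
  set B : ℕ → ℝ := fun k => m + k * (log k + |log m|)
  have hr_sq := eventually_sq_div_four_le E
  have hr : Tendsto r atTop atTop :=
    tendsto_atTop_mono' _ hr_sq <| ((tendsto_pow_atTop two_ne_zero).comp
      tendsto_natCast_atTop_atTop).atTop_div_const (by norm_num)
  have hX_sub : ∀ k : ℕ, {ω | X ω = k} ≤ᵐ[P] {ω | E + r k ≤ N ω} := fun k => by
    filter_upwards [hNX] with ω hω (hXk : X ω = k)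
    show E + r k ≤ N ω
    simpa [r, hXk] using hω
  have hI : ∀ k : ℕ, 0 < r k → I (r k) ≤ B k := fun k hk =>
    (le_neg_log_of_ae_le (by positivity) (hX k) (hX_sub k) (htail _ hk)).trans
      (neg_log_poisson_le hm k)
  have hbound :
      ∀ᶠ k : ℕ in atTop, I (r k) / r k ^ a ≤ 4 ^ a * (B k / (k : ℝ) ^ (2 * a)) := by
    filter_upwards [hr_sq, eventually_gt_atTop 0] with k hk hk0
    have hk0 : (0 : ℝ) < k := by exact_mod_cast hk0
    have hrk : 0 < r k := (by positivity : (0 : ℝ) < k ^ 2 / 4).trans_le hk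
    exact div_rpow_le_of_sq_div_four_le (by linarith) hk0 hk (hI k hrk)
      (add_nonneg hm.le <| mul_nonneg hk0.le <| add_nonneg (log_natCast_nonneg k) (abs_nonneg _))
  have hzero : Tendsto (fun k : ℕ => 4 ^ a * (B k / (k : ℝ) ^ (2 * a))) atTop (nhds 0) := by
    simpa using (((isLittleO_const_add_mul_log_add_const_rpow (by linarith) m
      |log m|).tendsto_div_nhds_zero).comp tendsto_natCast_atTop_atTop).const_mul (4 ^ a)
  linarith [le_of_tendsto_of_tendsto (hlim.comp hr) hzero hbound]

/-- Corollary 6.2: let `X` be Poisson with mean `m > 0`, let `N ≥ X(X−1)/2` a.s. be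
integrable, and let `I` satisfy `P(N ≥ EN + r) ≤ exp(−I(r))` for all `r > 0`.
If `I(r)/r^a → b` as `r → ∞` for constants `a, b > 0`, then `a ≤ 1/2`. -/
theorem upper_tail_exponent_le_half {Ω : Type*} [MeasurableSpace Ω]
    (P : Measure Ω) [IsProbabilityMeasure P]
    (m : ℝ) (hm : 0 < m) (X : Ω → ℕ)
    (hX : ∀ k : ℕ, P {ω | X ω = k} =
      ENNReal.ofReal (Real.exp (-m) * m ^ k / (Nat.factorial k : ℝ)))
    (N : Ω → ℝ) (hN : Integrable N P)
    (hNX : ∀ᵐ ω ∂P, (X ω : ℝ) * ((X ω : ℝ) - 1) / 2 ≤ N ω)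
    (I : ℝ → ℝ) (hIpos : ∀ r : ℝ, 0 < r → 0 < I r)
    (htail : ∀ r : ℝ, 0 < r →
      (P {ω | (∫ ω', N ω' ∂P) + r ≤ N ω}).toReal ≤ Real.exp (-I r))
    (a b : ℝ) (ha : 0 < a) (hb : 0 < b)
    (hlim : Tendsto (fun r : ℝ => I r / r ^ a) atTop (nhds b)) :
    a ≤ 1 / 2 :=
  upper_tail_exponent_le_half_general P m hm X hX N hNX I htail a b hb hlim
end
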